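/- arXiv:2404.18699 — 2 statements merged into one kernel-verified Lean document; each statement's English description precedes it below -/
import Mathlib

section
/- Let π be a probability density on ℝⁿ supported in a ball of radius r. Define p_ν = π * N(0, ν² I). If ν > r, then -log p_ν is convex on ℝⁿ. (In particular, for ν sufficiently large the smoothed negative log-likelihood is convex.) -/
open scoped Real RealInnerProductSpace

open MeasureTheory ProbabilityTheory Set Real

/-!
Along a line `x + t • v` the Gaussian kernel factors as
`exp (-‖x - y‖² / 2ν²) * exp (t * ⟪y - x, v⟫ / ν²) * exp (-t² ‖v‖² / 2ν²)`, so
`-log p (x + t • v) = t² ‖v‖² / 2ν² - K t`, where `K` is the cumulant generating function of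
`y ↦ ⟪y - x, v⟫ / ν²` under the unnormalised posterior at `x`. Its second derivative `K''` is a
variance under a tilted posterior, which still lives in the ball of radius `r`; by Popoviciu's
inequality `K'' ≤ (r ‖v‖ / ν²)² ≤ ‖v‖² / ν²` as soon as `r ≤ ν`.
-/

lemma convexOn_mul_sq_div_two_sub_cgf {Ω : Type*} [MeasurableSpace Ω] {μ : Measure Ω}
    [IsFiniteMeasure μ] [NeZero μ] {X : Ω → ℝ} {a b q : ℝ} (hX : AEMeasurable X μ)
    (hb : ∀ᵐ ω ∂μ, X ω ∈ Icc a b) (hq : ((b - a) / 2) ^ 2 ≤ q) :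
    ConvexOn ℝ univ (fun t ↦ q * t ^ 2 / 2 - cgf X μ t) := by
  have hint (t : ℝ) : Integrable (fun ω ↦ exp (t * X ω)) μ :=
    integrable_exp_mul_of_mem_Icc hX hb
  have hmem (t : ℝ) : t ∈ interior (integrableExpSet X μ) := by
    simp [integrableExpSet, hint]
  have hvar (t : ℝ) : iteratedDeriv 2 (cgf X μ) t ≤ ((b - a) / 2) ^ 2 := by
    have := isProbabilityMeasure_tilted (hint t)
    rw [← variance_tilted_mul (hmem t)]
    exact variance_le_sq_of_bounded (tilted_absolutelyContinuous μ _ hb)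
      (hX.mono_ac (tilted_absolutelyContinuous μ _))
  have hd (t : ℝ) : HasDerivAt (cgf X μ) (deriv (cgf X μ) t) t :=
    (analyticAt_cgf (hmem t)).differentiableAt.hasDerivAt
  have hd2 (t : ℝ) : HasDerivAt (deriv (cgf X μ)) (iteratedDeriv 2 (cgf X μ) t) t := by
    rw [iteratedDeriv_succ, iteratedDeriv_one]
    exact (analyticAt_cgf (hmem t)).deriv.differentiableAt.hasDerivAt
  have hsq (t : ℝ) : HasDerivAt (fun t ↦ q * t ^ 2 / 2) (q * t) t :=
    (((hasDerivAt_pow 2 t).const_mul q).div_const 2).congr_deriv (by norm_num; ring)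
  have hlin (t : ℝ) : HasDerivAt (fun t ↦ q * t) q t := by
    simpa using (hasDerivAt_id t).const_mul q
  refine convexOn_of_hasDerivWithinAt2_nonneg convex_univ
    (f' := fun t ↦ q * t - deriv (cgf X μ) t) (f'' := fun t ↦ q - iteratedDeriv 2 (cgf X μ) t)
    ?_ (fun t _ ↦ ?_) (fun t _ ↦ ?_) (fun t _ ↦ by linarith [hvar t])
  · exact (continuous_iff_continuousAt.2 fun t ↦ ((hsq t).sub (hd t)).continuousAt).continuousOn
  · exact ((hsq t).sub (hd t)).hasDerivWithinAt
  · exact ((hlin t).sub (hd2 t)).hasDerivWithinAt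

lemma convexOn_univ_of_forall_convexOn_add_smul {E : Type*} [AddCommGroup E] [Module ℝ E]
    {f : E → ℝ}
    (h : ∀ x v : E, ConvexOn ℝ univ (fun t : ℝ ↦ f (x + t • v))) : ConvexOn ℝ univ f := by
  refine ⟨convex_univ, fun x _ y _ a b ha hb hab ↦ ?_⟩
  have := (h x (y - x)).2 (mem_univ 0) (mem_univ 1) ha hb hab
  have hxy : a • x + b • y = x + (a • (0 : ℝ) + b • (1 : ℝ)) • (y - x) := by
    rw [eq_sub_of_add_eq hab]
    module
  simpa [hxy] using this

lemma neg_norm_add_smul_sub_sq_div {E : Type*} [NormedAddCommGroup E] [InnerProductSpace ℝ E]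
    (x v y : E) (t ν : ℝ) :
    -‖x + t • v - y‖ ^ 2 / (2 * ν ^ 2) =
      -‖x - y‖ ^ 2 / (2 * ν ^ 2) + t * (⟪y - x, v⟫ / ν ^ 2) - ‖v‖ ^ 2 / ν ^ 2 * t ^ 2 / 2 := by
  rw [show x + t • v - y = (x - y) + t • v by abel, norm_add_sq_real, inner_smul_right,
    norm_smul, mul_pow, norm_eq_abs, sq_abs, ← neg_sub y x, inner_neg_left]
  ring

section

variable {E : Type*} [NormedAddCommGroup E] [MeasurableSpace E] [OpensMeasurableSpace E]
  {μ : Measure E} {f : E → ℝ} {ν : ℝ}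

/-- The posterior of `y` given `x` under the prior density `f` and noise `N(0, ν² I)`, without
the normalising constants. -/
noncomputable def smoothingPosterior (μ : Measure E) (f : E → ℝ) (ν : ℝ) (x : E) : Measure E :=
  μ.withDensity fun y ↦ ENNReal.ofReal (f y * exp (-‖x - y‖ ^ 2 / (2 * ν ^ 2)))

lemma integrable_mul_gaussian (hfi : Integrable f μ) (x : E) :
    Integrable (fun y ↦ f y * exp (-‖x - y‖ ^ 2 / (2 * ν ^ 2))) μ := by
  refine hfi.mul_bdd (c := 1) (Continuous.aestronglyMeasurable (by fun_prop))
    (Filter.Eventually.of_forall fun y ↦ ?_)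
  rw [norm_of_nonneg (exp_pos _).le, exp_le_one_iff, neg_div]
  exact neg_nonpos.2 (by positivity)

lemma isFiniteMeasure_smoothingPosterior (hfi : Integrable f μ) (x : E) :
    IsFiniteMeasure (smoothingPosterior μ f ν x) :=
  isFiniteMeasure_withDensity_ofReal (integrable_mul_gaussian hfi x).2

lemma neZero_smoothingPosterior (hf0 : ∀ y, 0 ≤ f y) (hfi : Integrable f μ)
    (hf_pos : 0 < ∫ y, f y ∂μ) (x : E) : NeZero (smoothingPosterior μ f ν x) := by
  refine ⟨fun h ↦ hf_pos.ne' (integral_eq_zero_of_ae ?_)⟩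
  rw [smoothingPosterior, withDensity_eq_zero_iff
    (integrable_mul_gaussian hfi x).aemeasurable.ennreal_ofReal] at h
  filter_upwards [h] with y hy
  have := ENNReal.ofReal_eq_zero.1 hy
  exact le_antisymm (nonpos_of_mul_nonpos_left this (exp_pos _)) (hf0 y)

lemma ae_smoothingPosterior_norm_le {r : ℝ} (hfi : Integrable f μ)
    (hsupp : Function.support f ⊆ Metric.closedBall 0 r) (x : E) :
    ∀ᵐ y ∂smoothingPosterior μ f ν x, ‖y‖ ≤ r := by
  rw [smoothingPosterior, ae_withDensity_iff'
    (integrable_mul_gaussian hfi x).aemeasurable.ennreal_ofReal]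
  refine Filter.Eventually.of_forall fun y hy ↦ ?_
  have hfy : f y ≠ 0 := by
    rintro h
    simp [h] at hy
  simpa using hsupp hfy

variable [InnerProductSpace ℝ E]

lemma integral_mul_gaussian_add_smul (hf0 : ∀ y, 0 ≤ f y) (hfi : Integrable f μ) (x v : E)
    (t : ℝ) :
    ∫ y, f y * exp (-‖x + t • v - y‖ ^ 2 / (2 * ν ^ 2)) ∂μ =
      exp (-(‖v‖ ^ 2 / ν ^ 2 * t ^ 2 / 2)) *
        mgf (fun y ↦ ⟪y - x, v⟫ / ν ^ 2) (smoothingPosterior μ f ν x) t := by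
  rw [mgf, smoothingPosterior, integral_withDensity_eq_integral_toReal_smul₀
    (integrable_mul_gaussian hfi x).aemeasurable.ennreal_ofReal
    (Filter.Eventually.of_forall fun _ ↦ ENNReal.ofReal_lt_top), ← integral_const_mul]
  refine integral_congr_ae (Filter.Eventually.of_forall fun y ↦ ?_)
  simp only [smul_eq_mul, ENNReal.toReal_ofReal (mul_nonneg (hf0 y) (exp_pos _).le),
    neg_norm_add_smul_sub_sq_div x v y t, exp_add, exp_sub, exp_neg]
  ring

theorem convexOn_neg_log_integral_mul_gaussian (hf0 : ∀ y, 0 ≤ f y) (hfi : Integrable f μ)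
    (hf_pos : 0 < ∫ y, f y ∂μ) {r : ℝ} (hr : 0 ≤ r) (hrν : r ≤ ν)
    (hsupp : Function.support f ⊆ Metric.closedBall 0 r) :
    ConvexOn ℝ univ (fun x ↦ -log (∫ y, f y * exp (-‖x - y‖ ^ 2 / (2 * ν ^ 2)) ∂μ)) := by
  refine convexOn_univ_of_forall_convexOn_add_smul fun x v ↦ ?_
  have := isFiniteMeasure_smoothingPosterior (ν := ν) hfi x
  have := neZero_smoothingPosterior (ν := ν) hf0 hfi hf_pos x
  have hX_mem : ∀ᵐ y ∂smoothingPosterior μ f ν x, ⟪y - x, v⟫ / ν ^ 2 ∈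
      Icc ((-⟪x, v⟫ - r * ‖v‖) / ν ^ 2) ((-⟪x, v⟫ + r * ‖v‖) / ν ^ 2) := by
    filter_upwards [ae_smoothingPosterior_norm_le hfi hsupp x] with y hy
    have h := abs_le.1 ((abs_real_inner_le_norm y v).trans
      (mul_le_mul_of_nonneg_right hy (norm_nonneg v)))
    rw [inner_sub_left]
    exact ⟨div_le_div_of_nonneg_right (by linarith) (sq_nonneg ν),
      div_le_div_of_nonneg_right (by linarith) (sq_nonneg ν)⟩
  have hq : (((-⟪x, v⟫ + r * ‖v‖) / ν ^ 2 - (-⟪x, v⟫ - r * ‖v‖) / ν ^ 2) / 2) ^ 2 ≤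
      ‖v‖ ^ 2 / ν ^ 2 := by
    rw [show (((-⟪x, v⟫ + r * ‖v‖) / ν ^ 2 - (-⟪x, v⟫ - r * ‖v‖) / ν ^ 2) / 2) ^ 2 =
      ‖v‖ ^ 2 / ν ^ 2 * (r ^ 2 / ν ^ 2) by ring]
    exact mul_le_of_le_one_right (by positivity)
      (div_le_one_of_le₀ (pow_le_pow_left₀ hr hrν 2) (sq_nonneg ν))
  have hX : AEMeasurable (fun y ↦ ⟪y - x, v⟫ / ν ^ 2) (smoothingPosterior μ f ν x) :=
    Continuous.aemeasurable (by fun_prop)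
  refine (convexOn_mul_sq_div_two_sub_cgf hX hX_mem hq).congr fun t _ ↦ ?_
  have hmgf := mgf_pos' (NeZero.ne _) (integrable_exp_mul_of_mem_Icc (t := t) hX hX_mem)
  dsimp only
  rw [integral_mul_gaussian_add_smul hf0 hfi x v t, log_mul (exp_pos _).ne' hmgf.ne', log_exp,
    cgf]
  ring

end

theorem stmt_10 (n : ℕ) (π' : EuclideanSpace ℝ (Fin n) → ℝ)
    (hπ0 : ∀ x, 0 ≤ π' x)
    (hπ1 : ∫ x, π' x = 1)
    (r : ℝ) (hr : 0 ≤ r)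
    (hsupp : Function.support π' ⊆ Metric.closedBall 0 r)
    (ν : ℝ) (hν : r < ν)
    (p : EuclideanSpace ℝ (Fin n) → ℝ)
    (hp : ∀ x, p x = ∫ y, π' y *
      ((2 * π * ν ^ 2) ^ (-(n : ℝ) / 2) * Real.exp (-‖x - y‖ ^ 2 / (2 * ν ^ 2)))) :
    ConvexOn ℝ Set.univ (fun x => -Real.log (p x)) := by
  have hν0 : 0 < ν := hr.trans_lt hν
  have hc : 0 < (2 * π * ν ^ 2) ^ (-(n : ℝ) / 2) := by positivity
  have hπi : Integrable π' := by
    by_contra h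
    simp [integral_undef h] at hπ1
  refine (convexOn_neg_log_integral_mul_gaussian (fun y ↦ mul_nonneg hc.le (hπ0 y))
    (hπi.const_mul _) (by rwa [integral_const_mul, hπ1, mul_one]) hr hν.le
    ((Function.support_mul_subset_right _ _).trans hsupp)).congr fun x _ ↦ ?_
  simp only [hp x, mul_assoc, mul_left_comm (π' _)]
end

section
/- Let F : ℝⁿ × [t_min, t_max] → ℝ with F(x, t) = D(x) + α_t R(x, t), where D is C¹ and α_t ∇_x R(x, t) is L-Lipschitz in t uniformly in x. Then for f(x) := F(x, t_min), the update direction d(x, t) = -t ∇_x F(x, t) satisfies ⟨∇f(x), d(x, t)⟩ ≤ -t‖∇f(x)‖² + t‖∇f(x)‖·L·(t - t_min) for all t ∈ [t_min, t_max]; in particular, if ‖∇f(x)‖ > L(t - t_min) then d(x, t) is a descent direction for f at x. -/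
/-! The gradient of `F(·, t)` differs from `∇f` by `α_t ∇R(·, t) - α_{t_min} ∇R(·, t_min)`, whose
norm is at most `L (t - t_min)` by the Lipschitz assumption. Hence
`⟪∇f, -t ∇F(·, t)⟫ = -t ‖∇f‖² - t ⟪∇f, ∇F(·, t) - ∇f⟫`, and Cauchy–Schwarz bounds the error term
by `t ‖∇f‖ L (t - t_min)`. -/

open scoped RealInnerProductSpace

section Gradient

variable {E : Type*} [NormedAddCommGroup E] [InnerProductSpace ℝ E] [CompleteSpace E]

theorem gradient_add_const_mul {g h : E → ℝ} {x : E} (c : ℝ)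
    (hg : DifferentiableAt ℝ g x) (hh : DifferentiableAt ℝ h x) :
    gradient (fun z => g z + c * h z) x = gradient g x + c • gradient h x := by
  unfold gradient
  rw [fderiv_fun_add hg (hh.const_mul c), fderiv_const_mul hh c, map_add, map_smul]

end Gradient

section Descent

variable {E : Type*} [NormedAddCommGroup E] [InnerProductSpace ℝ E]

theorem inner_neg_smul_add_le {g e : E} {t δ : ℝ} (ht : 0 ≤ t) (he : ‖e‖ ≤ δ) :
    ⟪g, -t • (g + e)⟫ ≤ -t * ‖g‖ ^ 2 + t * ‖g‖ * δ := by
  have hcs : -(‖g‖ * δ) ≤ ⟪g, e⟫ :=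
    calc -(‖g‖ * δ) ≤ -(‖g‖ * ‖e‖) := by gcongr
      _ ≤ ⟪g, e⟫ := neg_le_of_abs_le (abs_real_inner_le_norm g e)
  calc ⟪g, -t • (g + e)⟫ = -t * ‖g‖ ^ 2 + t * -⟪g, e⟫ := by
        rw [real_inner_smul_right, inner_add_right, real_inner_self_eq_norm_sq]; ring
    _ ≤ -t * ‖g‖ ^ 2 + t * (‖g‖ * δ) := by gcongr; linarith
    _ = -t * ‖g‖ ^ 2 + t * ‖g‖ * δ := by ring

theorem neg_mul_sq_add_mul_mul_neg {t a δ : ℝ} (ht : 0 < t) (hδ : 0 ≤ δ) (hδa : δ < a) :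
    -t * a ^ 2 + t * a * δ < 0 := by
  have ha : 0 < a := hδ.trans_lt hδa
  nlinarith [mul_pos (mul_pos ht ha) (sub_pos.mpr hδa)]

end Descent

theorem stmt_19_general (n : ℕ)
    (tmin tmax L : ℝ) (htmin : 0 < tmin) (hle : tmin ≤ tmax)
    (D : EuclideanSpace ℝ (Fin n) → ℝ) (hD : ContDiff ℝ 1 D)
    (R : EuclideanSpace ℝ (Fin n) → ℝ → ℝ)
    (hR : ∀ t ∈ Set.Icc tmin tmax, ContDiff ℝ 1 (fun z => R z t))
    (α : ℝ → ℝ)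
    (hLip : ∀ x, ∀ t ∈ Set.Icc tmin tmax, ∀ s ∈ Set.Icc tmin tmax,
      ‖α t • gradient (fun z => R z t) x - α s • gradient (fun z => R z s) x‖ ≤
        L * |t - s|)
    (f : EuclideanSpace ℝ (Fin n) → ℝ)
    (hf : ∀ x, f x = D x + α tmin * R x tmin)
    (d : EuclideanSpace ℝ (Fin n) → ℝ → EuclideanSpace ℝ (Fin n))
    (hd : ∀ x t, d x t = -t • gradient (fun z => D z + α t * R z t) x) :
    ∀ x, ∀ t ∈ Set.Icc tmin tmax,
      (⟪gradient f x, d x t⟫ ≤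
        -t * ‖gradient f x‖ ^ 2 + t * ‖gradient f x‖ * (L * (t - tmin))) ∧
      (L * (t - tmin) < ‖gradient f x‖ → ⟪gradient f x, d x t⟫ < 0) := by
  intro x t ht
  have hmin : tmin ∈ Set.Icc tmin tmax := ⟨le_rfl, hle⟩
  have hpos : 0 < t := htmin.trans_le ht.1
  have gradient_F : ∀ s ∈ Set.Icc tmin tmax, gradient (fun z => D z + α s * R z s) x =
      gradient D x + α s • gradient (fun z => R z s) x := fun s hs =>
    gradient_add_const_mul _ (hD.differentiable one_ne_zero x)
      ((hR s hs).differentiable one_ne_zero x)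
  set e := α t • gradient (fun z => R z t) x - α tmin • gradient (fun z => R z tmin) x with he_def
  have he : ‖e‖ ≤ L * (t - tmin) := by
    simpa only [abs_of_nonneg (sub_nonneg.mpr ht.1)] using hLip x t ht tmin hmin
  have hdir : d x t = -t • (gradient f x + e) := by
    rw [hd, show f = fun z => D z + α tmin * R z tmin from funext hf, gradient_F t ht,
      gradient_F tmin hmin, add_assoc, he_def, add_sub_cancel]
  have hbound := hdir ▸ inner_neg_smul_add_le (g := gradient f x) hpos.le he
  exact ⟨hbound, fun hlt =>
    hbound.trans_lt (neg_mul_sq_add_mul_mul_neg hpos ((norm_nonneg e).trans he) hlt)⟩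

theorem stmt_19 (n : ℕ)
    (tmin tmax L : ℝ) (htmin : 0 < tmin) (hle : tmin ≤ tmax) (hL : 0 ≤ L)
    (D : EuclideanSpace ℝ (Fin n) → ℝ) (hD : ContDiff ℝ 1 D)
    (R : EuclideanSpace ℝ (Fin n) → ℝ → ℝ)
    (hR : ∀ t ∈ Set.Icc tmin tmax, ContDiff ℝ 1 (fun z => R z t))
    (α : ℝ → ℝ)
    (hLip : ∀ x, ∀ t ∈ Set.Icc tmin tmax, ∀ s ∈ Set.Icc tmin tmax,
      ‖α t • gradient (fun z => R z t) x - α s • gradient (fun z => R z s) x‖ ≤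
        L * |t - s|)
    (f : EuclideanSpace ℝ (Fin n) → ℝ)
    (hf : ∀ x, f x = D x + α tmin * R x tmin)
    (d : EuclideanSpace ℝ (Fin n) → ℝ → EuclideanSpace ℝ (Fin n))
    (hd : ∀ x t, d x t = -t • gradient (fun z => D z + α t * R z t) x) :
    ∀ x, ∀ t ∈ Set.Icc tmin tmax,
      (⟪gradient f x, d x t⟫ ≤
        -t * ‖gradient f x‖ ^ 2 + t * ‖gradient f x‖ * (L * (t - tmin))) ∧
      (L * (t - tmin) < ‖gradient f x‖ → ⟪gradient f x, d x t⟫ < 0) :=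
  stmt_19_general n tmin tmax L htmin hle D hD R hR α hLip f hf d hd
end
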